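/- Assume all corner concentration values of all cells are strictly positive, all values D₁₁^∓ lie in [0, D₁₁^M], all values |D₁₂^∓| are at most D₁₂^M, α̃ ≥ (Δy/(2Δx))·D₁₁^M + √3·D₁₂^M, and D₁₁^M·Λ₁ + 2(α̃ + D₁₂^M)·λ < Φ_m/12, where Φ_m is the minimum of Φ over all mesh corners. Then the x-diffusion part H^d_x := r̄_{ij}/6 − λ₁·∑_{β=1,2} w_β[ {D₁₁c_x + D₁₂c_y}_{i−1/2,j,β} + (α̃/Δy)·[c]_{i−1/2,j,β} − {D₁₁c_x + D₁₂c_y}_{i+1/2,j,β} − (α̃/Δy)·[c]_{i+1/2,j,β} ] is strictly positive for every interior cell (2 ≤ i ≤ N_x−1, 2 ≤ j ≤ N_y−1). -/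

import Mathlib

noncomputable section

namespace DG2D

/-- Gauss constant `μ₁ = (3+√3)/6`. -/
def mu1 : ℝ := (3 + Real.sqrt 3) / 6

/-- Gauss constant `μ₂ = (3-√3)/6`. -/
def mu2 : ℝ := (3 - Real.sqrt 3) / 6

/-- Value at the Gauss point `β` of an edge, from the two endpoint (corner) values:
`β = 1` gives `μ₁·a + μ₂·b`, `β = 2` gives `μ₂·a + μ₁·b`. -/
def ga (β : Fin 2) (a b : ℝ) : ℝ := if β = 0 then mu1 * a + mu2 * b else mu2 * a + mu1 * b

/-- Cell average `r̄_{ij} = (1/4)·∑ cΦ` over the four corners of `K_{ij}`.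
`Φ i j` denotes the corner value `Φ_{i+1/2,j+1/2}`; `c00 i j`, `c10 i j`, `c01 i j`,
`c11 i j` denote the corner values of `c` in cell `K_{ij}` at the corners
`(i-1/2,j-1/2)`, `(i+1/2,j-1/2)`, `(i-1/2,j+1/2)`, `(i+1/2,j+1/2)` respectively. -/
def rbar (Φ c00 c10 c01 c11 : ℕ → ℕ → ℝ) (i j : ℕ) : ℝ :=
  (c00 i j * Φ (i - 1) (j - 1) + c10 i j * Φ i (j - 1)
    + c01 i j * Φ (i - 1) j + c11 i j * Φ i j) / 4

/-- Trace `c⁻` (from `K_{ij}`) at Gauss point `β` of the vertical edge `x_{i+1/2}`, row `j`. -/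
def cmV (c10 c11 : ℕ → ℕ → ℝ) (i j : ℕ) (β : Fin 2) : ℝ := ga β (c10 i j) (c11 i j)

/-- Trace `c⁺` (from `K_{i+1,j}`) at Gauss point `β` of the vertical edge `x_{i+1/2}`, row `j`. -/
def cpV (c00 c01 : ℕ → ℕ → ℝ) (i j : ℕ) (β : Fin 2) : ℝ := ga β (c00 (i + 1) j) (c01 (i + 1) j)

/-- Trace `c⁻` (from `K_{ij}`) at Gauss point `β` of the horizontal edge `y_{j+1/2}`, column `i`. -/
def cmH (c01 c11 : ℕ → ℕ → ℝ) (i j : ℕ) (β : Fin 2) : ℝ := ga β (c01 i j) (c11 i j)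

/-- Trace `c⁺` (from `K_{i,j+1}`) at Gauss point `β` of the horizontal edge `y_{j+1/2}`. -/
def cpH (c00 c10 : ℕ → ℕ → ℝ) (i j : ℕ) (β : Fin 2) : ℝ := ga β (c00 i (j + 1)) (c10 i (j + 1))

/-- Jump `[c] = c⁺ - c⁻` at a vertical-edge Gauss point. -/
def jumpV (c00 c10 c01 c11 : ℕ → ℕ → ℝ) (i j : ℕ) (β : Fin 2) : ℝ :=
  cpV c00 c01 i j β - cmV c10 c11 i j β

/-- Jump `[c] = c⁺ - c⁻` at a horizontal-edge Gauss point. -/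
def jumpH (c00 c10 c01 c11 : ℕ → ℕ → ℝ) (i j : ℕ) (β : Fin 2) : ℝ :=
  cpH c00 c10 i j β - cmH c01 c11 i j β

/-- Convective flux `û₁c = u₁⁺·c⁺ - α·[c]` at vertical-edge Gauss points. -/
def uc1 (u1 : ℕ → ℕ → Fin 2 → ℝ) (c00 c10 c01 c11 : ℕ → ℕ → ℝ) (α : ℝ)
    (i j : ℕ) (β : Fin 2) : ℝ :=
  u1 i j β * cpV c00 c01 i j β - α * (cpV c00 c01 i j β - cmV c10 c11 i j β)

/-- Convective flux `û₂c = u₂⁺·c⁺ - α·[c]` at horizontal-edge Gauss points. -/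
def uc2 (u2 : ℕ → ℕ → Fin 2 → ℝ) (c00 c10 c01 c11 : ℕ → ℕ → ℝ) (α : ℝ)
    (i j : ℕ) (β : Fin 2) : ℝ :=
  u2 i j β * cpH c00 c10 i j β - α * (cpH c00 c10 i j β - cmH c01 c11 i j β)

/-- Convection part `H^c_{ij}`. -/
def Hc (u1 u2 : ℕ → ℕ → Fin 2 → ℝ) (Φ c00 c10 c01 c11 : ℕ → ℕ → ℝ) (α Δx Δy Δt : ℝ)
    (i j : ℕ) : ℝ :=
  rbar Φ c00 c10 c01 c11 i j / 3
    + (Δt / Δx) * ∑ β : Fin 2, (1 / 2 : ℝ) *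
        (uc1 u1 c00 c10 c01 c11 α (i - 1) j β - uc1 u1 c00 c10 c01 c11 α i j β)
    + (Δt / Δy) * ∑ β : Fin 2, (1 / 2 : ℝ) *
        (uc2 u2 c00 c10 c01 c11 α i (j - 1) β - uc2 u2 c00 c10 c01 c11 α i j β)

/-- Derivative trace `(c_x)⁻` at a vertical-edge Gauss point:
`(c_x)⁻_{i+1/2,β} = (c⁻_{i+1/2,β} - c⁺_{i-1/2,β})/Δx`. -/
def cxmV (c00 c10 c01 c11 : ℕ → ℕ → ℝ) (Δx : ℝ) (i j : ℕ) (β : Fin 2) : ℝ :=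
  (cmV c10 c11 i j β - cpV c00 c01 (i - 1) j β) / Δx

/-- Derivative trace `(c_x)⁺` at a vertical-edge Gauss point:
`(c_x)⁺_{i+1/2,β} = (c⁻_{i+3/2,β} - c⁺_{i+1/2,β})/Δx`. -/
def cxpV (c00 c10 c01 c11 : ℕ → ℕ → ℝ) (Δx : ℝ) (i j : ℕ) (β : Fin 2) : ℝ :=
  (cmV c10 c11 (i + 1) j β - cpV c00 c01 i j β) / Δx

/-- Tangential derivative trace `(c_y)⁻` on a vertical edge:
`(√3/Δy)·(c⁻_{i+1/2,2} - c⁻_{i+1/2,1})` (the same for both Gauss points). -/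
def cymV (c10 c11 : ℕ → ℕ → ℝ) (Δy : ℝ) (i j : ℕ) : ℝ :=
  (Real.sqrt 3 / Δy) * (cmV c10 c11 i j 1 - cmV c10 c11 i j 0)

/-- Tangential derivative trace `(c_y)⁺` on a vertical edge. -/
def cypV (c00 c01 : ℕ → ℕ → ℝ) (Δy : ℝ) (i j : ℕ) : ℝ :=
  (Real.sqrt 3 / Δy) * (cpV c00 c01 i j 1 - cpV c00 c01 i j 0)

/-- Average `{D₁₁c_x + D₁₂c_y}` at a vertical-edge Gauss point. -/
def GxV (D11m D11p D12m D12p : ℕ → ℕ → Fin 2 → ℝ) (c00 c10 c01 c11 : ℕ → ℕ → ℝ)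
    (Δx Δy : ℝ) (i j : ℕ) (β : Fin 2) : ℝ :=
  (D11m i j β * cxmV c00 c10 c01 c11 Δx i j β + D12m i j β * cymV c10 c11 Δy i j
    + D11p i j β * cxpV c00 c10 c01 c11 Δx i j β + D12p i j β * cypV c00 c01 Δy i j) / 2

/-- x-diffusion part `H^d_x`. -/
def Hdx (D11m D11p D12m D12p : ℕ → ℕ → Fin 2 → ℝ) (Φ c00 c10 c01 c11 : ℕ → ℕ → ℝ)
    (αt Δx Δy Δt : ℝ) (i j : ℕ) : ℝ :=
  rbar Φ c00 c10 c01 c11 i j / 6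
    - (Δt / Δx) * ∑ β : Fin 2, (1 / 2 : ℝ) *
        ((GxV D11m D11p D12m D12p c00 c10 c01 c11 Δx Δy (i - 1) j β
            + (αt / Δy) * jumpV c00 c10 c01 c11 (i - 1) j β)
          - (GxV D11m D11p D12m D12p c00 c10 c01 c11 Δx Δy i j β
            + (αt / Δy) * jumpV c00 c10 c01 c11 i j β))

/-- Derivative trace `(c_y)⁻` at a horizontal-edge Gauss point. -/
def cymH (c00 c10 c01 c11 : ℕ → ℕ → ℝ) (Δy : ℝ) (i j : ℕ) (β : Fin 2) : ℝ :=
  (cmH c01 c11 i j β - cpH c00 c10 i (j - 1) β) / Δy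

/-- Derivative trace `(c_y)⁺` at a horizontal-edge Gauss point. -/
def cypH (c00 c10 c01 c11 : ℕ → ℕ → ℝ) (Δy : ℝ) (i j : ℕ) (β : Fin 2) : ℝ :=
  (cmH c01 c11 i (j + 1) β - cpH c00 c10 i j β) / Δy

/-- Tangential derivative trace `(c_x)⁻` on a horizontal edge. -/
def cxmH (c01 c11 : ℕ → ℕ → ℝ) (Δx : ℝ) (i j : ℕ) : ℝ :=
  (Real.sqrt 3 / Δx) * (cmH c01 c11 i j 1 - cmH c01 c11 i j 0)

/-- Tangential derivative trace `(c_x)⁺` on a horizontal edge. -/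
def cxpH (c00 c10 : ℕ → ℕ → ℝ) (Δx : ℝ) (i j : ℕ) : ℝ :=
  (Real.sqrt 3 / Δx) * (cpH c00 c10 i j 1 - cpH c00 c10 i j 0)

/-- Average `{D₂₁c_x + D₂₂c_y}` at a horizontal-edge Gauss point. -/
def GyH (D21m D21p D22m D22p : ℕ → ℕ → Fin 2 → ℝ) (c00 c10 c01 c11 : ℕ → ℕ → ℝ)
    (Δx Δy : ℝ) (i j : ℕ) (β : Fin 2) : ℝ :=
  (D21m i j β * cxmH c01 c11 Δx i j + D22m i j β * cymH c00 c10 c01 c11 Δy i j β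
    + D21p i j β * cxpH c00 c10 Δx i j + D22p i j β * cypH c00 c10 c01 c11 Δy i j β) / 2

/-- y-diffusion part `H^d_y`. -/
def Hdy (D21m D21p D22m D22p : ℕ → ℕ → Fin 2 → ℝ) (Φ c00 c10 c01 c11 : ℕ → ℕ → ℝ)
    (αt Δx Δy Δt : ℝ) (i j : ℕ) : ℝ :=
  rbar Φ c00 c10 c01 c11 i j / 6
    - (Δt / Δy) * ∑ β : Fin 2, (1 / 2 : ℝ) *
        ((GyH D21m D21p D22m D22p c00 c10 c01 c11 Δx Δy i (j - 1) β
            + (αt / Δx) * jumpH c00 c10 c01 c11 i (j - 1) β)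
          - (GyH D21m D21p D22m D22p c00 c10 c01 c11 Δx Δy i j β
            + (αt / Δx) * jumpH c00 c10 c01 c11 i j β))

/-- Value of the bilinear function `c` at the interior Gauss point `(β,γ)` of cell `K_{ij}`. -/
def cGP (c00 c10 c01 c11 : ℕ → ℕ → ℝ) (i j : ℕ) (β γ : Fin 2) : ℝ :=
  ga β (ga γ (c00 i j) (c01 i j)) (ga γ (c10 i j) (c11 i j))

/-- Value of the bilinear function `r = cΦ` at the interior Gauss point `(β,γ)` of `K_{ij}`. -/
def rGP (Φ c00 c10 c01 c11 : ℕ → ℕ → ℝ) (i j : ℕ) (β γ : Fin 2) : ℝ :=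
  ga β (ga γ (c00 i j * Φ (i - 1) (j - 1)) (c01 i j * Φ (i - 1) j))
    (ga γ (c10 i j * Φ i (j - 1)) (c11 i j * Φ i j))

/-- Value of the bilinear interpolant of `Φ` at the interior Gauss point `(β,γ)` of `K_{ij}`. -/
def phiGP (Φ : ℕ → ℕ → ℝ) (i j : ℕ) (β γ : Fin 2) : ℝ :=
  ga β (ga γ (Φ (i - 1) (j - 1)) (Φ (i - 1) j)) (ga γ (Φ i (j - 1)) (Φ i j))

/-- Source part `H^s_{ij}`. -/
def Hs (Φ c00 c10 c01 c11 : ℕ → ℕ → ℝ) (q ct P : ℕ → ℕ → Fin 2 → Fin 2 → ℝ)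
    (z1 Δt : ℝ) (i j : ℕ) : ℝ :=
  rbar Φ c00 c10 c01 c11 i j / 3
    + Δt * ∑ β : Fin 2, ∑ γ : Fin 2, (1 / 2 : ℝ) * (1 / 2 : ℝ) *
        (ct i j β γ * q i j β γ - z1 * rGP Φ c00 c10 c01 c11 i j β γ * P i j β γ)

/-- The Euler-forward cell-average update `r̄^{new}_{ij} = H^c + H^d_x + H^d_y + H^s`. -/
def rbarnew (u1 u2 D11m D11p D12m D12p D21m D21p D22m D22p : ℕ → ℕ → Fin 2 → ℝ)
    (Φ c00 c10 c01 c11 : ℕ → ℕ → ℝ) (q ct P : ℕ → ℕ → Fin 2 → Fin 2 → ℝ)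
    (α αt z1 Δx Δy Δt : ℝ) (i j : ℕ) : ℝ :=
  Hc u1 u2 Φ c00 c10 c01 c11 α Δx Δy Δt i j
    + Hdx D11m D11p D12m D12p Φ c00 c10 c01 c11 αt Δx Δy Δt i j
    + Hdy D21m D21p D22m D22p Φ c00 c10 c01 c11 αt Δx Δy Δt i j
    + Hs Φ c00 c10 c01 c11 q ct P z1 Δt i j


/-! The flux through a vertical edge is linear in the Gauss-point traces. Under the penalty
condition on `α̃` the traces from the neighbouring cells `K_{i±1,j}` enter the flux difference
`F_{i-1/2} - F_{i+1/2}` with nonpositive coefficients, and the one-sided bound for the left edge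
gives the one for the right edge by reflection. Since the edge traces of `K_{ij}` sum to its
corner values, the flux difference is at most `K·∑ c` with
`K = D₁₁^M/(4Δx) + (√3 D₁₂^M + α̃)/(2Δy)`. The CFL condition gives `λ₁K < Φ/24` at every corner,
while `r̄_{ij}/6 = ∑ cΦ/24`. -/

lemma sqrt_three_le_two : Real.sqrt 3 ≤ 2 := by
  rw [Real.sqrt_le_left (by norm_num)]; norm_num

lemma mu1_add_mu2 : mu1 + mu2 = 1 := by
  unfold mu1 mu2; ring

lemma mu1_nonneg : 0 ≤ mu1 := by
  unfold mu1; positivity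

lemma mu2_nonneg : 0 ≤ mu2 := by
  unfold mu2; linarith [sqrt_three_le_two]

lemma ga_nonneg (β : Fin 2) {a b : ℝ} (ha : 0 ≤ a) (hb : 0 ≤ b) : 0 ≤ ga β a b := by
  have := mu1_nonneg
  have := mu2_nonneg
  unfold ga
  split_ifs <;> positivity

lemma ga_zero_add_ga_one (a b : ℝ) : ga 0 a b + ga 1 a b = a + b := by
  simp only [ga, one_ne_zero, if_true, if_false]
  linear_combination (a + b) * mu1_add_mu2

lemma cmV_nonneg {c10 c11 : ℕ → ℕ → ℝ} {i j : ℕ} (h10 : 0 ≤ c10 i j) (h11 : 0 ≤ c11 i j)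
    (β : Fin 2) : 0 ≤ cmV c10 c11 i j β :=
  ga_nonneg β h10 h11

lemma cpV_nonneg {c00 c01 : ℕ → ℕ → ℝ} {i j : ℕ} (h00 : 0 ≤ c00 (i + 1) j)
    (h01 : 0 ≤ c01 (i + 1) j) (β : Fin 2) : 0 ≤ cpV c00 c01 i j β :=
  ga_nonneg β h00 h01

lemma add_mul_sub_le_of_abs_le {x y M p q : ℝ} (hx : |x| ≤ M) (hy : |y| ≤ M)
    (hp : 0 ≤ p) (hq : 0 ≤ q) : (x + y) * (q - p) ≤ 2 * M * (p + q) := by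
  have hxy : |x + y| ≤ 2 * M := by linarith [abs_add_le x y]
  have hqp : |q - p| ≤ p + q := abs_sub_le_iff.mpr ⟨by linarith, by linarith⟩
  calc (x + y) * (q - p) ≤ |x + y| * |q - p| := by rw [← abs_mul]; exact le_abs_self _
    _ ≤ 2 * M * (p + q) := mul_le_mul hxy hqp (abs_nonneg _) (by linarith [abs_nonneg x])

/-- `cm`, `cp` are the traces `c⁻`, `c⁺` on the edge; `cL` is `c⁺` on the edge to the left and
`cR` is `c⁻` on the edge to the right, as they enter the one-sided differences `c_x`. -/
def xDiffusionFlux (D11m D11p D12m D12p cL cm cp cR : Fin 2 → ℝ) (Δx Δy αt : ℝ)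
    (β : Fin 2) : ℝ :=
  (D11m β * ((cm β - cL β) / Δx) + D12m β * (Real.sqrt 3 / Δy * (cm 1 - cm 0))
    + D11p β * ((cR β - cp β) / Δx) + D12p β * (Real.sqrt 3 / Δy * (cp 1 - cp 0))) / 2
    + αt / Δy * (cp β - cm β)

lemma GxV_add_jumpV (D11m D11p D12m D12p : ℕ → ℕ → Fin 2 → ℝ) (c00 c10 c01 c11 : ℕ → ℕ → ℝ)
    (αt Δx Δy : ℝ) (i j : ℕ) (β : Fin 2) :
    GxV D11m D11p D12m D12p c00 c10 c01 c11 Δx Δy i j β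
        + αt / Δy * jumpV c00 c10 c01 c11 i j β
      = xDiffusionFlux (D11m i j) (D11p i j) (D12m i j) (D12p i j) (cpV c00 c01 (i - 1) j)
          (cmV c10 c11 i j) (cpV c00 c01 i j) (cmV c10 c11 (i + 1) j) Δx Δy αt β :=
  rfl

/-- The reflection `x ↦ -x`: it swaps the two sides of the edge and flips the sign of `D₁₂`. -/
lemma neg_xDiffusionFlux (D11m D11p D12m D12p cL cm cp cR : Fin 2 → ℝ) (Δx Δy αt : ℝ)
    (β : Fin 2) :
    -xDiffusionFlux D11m D11p D12m D12p cL cm cp cR Δx Δy αt β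
      = xDiffusionFlux D11p D11m (-D12p) (-D12m) cR cp cm cL Δx Δy αt β := by
  simp only [xDiffusionFlux, Pi.neg_apply]
  ring

lemma sum_xDiffusionFlux_le {D11m D11p D12m D12p cL cm cp cR : Fin 2 → ℝ}
    {Δx Δy αt D11M D12M : ℝ} (hΔx : 0 < Δx) (hΔy : 0 < Δy)
    (hD11m : ∀ β, 0 ≤ D11m β ∧ D11m β ≤ D11M) (hD11p : ∀ β, 0 ≤ D11p β ∧ D11p β ≤ D11M)
    (hD12m : ∀ β, |D12m β| ≤ D12M) (hD12p : ∀ β, |D12p β| ≤ D12M)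
    (hcL : ∀ β, 0 ≤ cL β) (hcm : ∀ β, 0 ≤ cm β) (hcp : ∀ β, 0 ≤ cp β) (hcR : ∀ β, 0 ≤ cR β)
    (hαt : (Δy / (2 * Δx)) * D11M + Real.sqrt 3 * D12M ≤ αt) :
    ∑ β, (1 / 2 : ℝ) * xDiffusionFlux D11m D11p D12m D12p cL cm cp cR Δx Δy αt β
      ≤ D11M / (4 * Δx) * (cR 0 + cR 1) + (Real.sqrt 3 * D12M + αt) / (2 * Δy) * (cp 0 + cp 1) := by
  have hm : ∀ β, D11m β * (cm β - cL β) ≤ D11M * cm β := fun β => by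
    nlinarith [mul_le_mul_of_nonneg_right (hD11m β).2 (hcm β), mul_nonneg (hD11m β).1 (hcL β)]
  have hp : ∀ β, D11p β * (cR β - cp β) ≤ D11M * cR β := fun β => by
    nlinarith [mul_le_mul_of_nonneg_right (hD11p β).2 (hcR β), mul_nonneg (hD11p β).1 (hcp β)]
  have htm := add_mul_sub_le_of_abs_le (hD12m 0) (hD12m 1) (hcm 0) (hcm 1)
  have htp := add_mul_sub_le_of_abs_le (hD12p 0) (hD12p 1) (hcp 0) (hcp 1)
  -- the penalty absorbs everything the traces `cm` contribute
  have hpen : (D11M / (4 * Δx) + Real.sqrt 3 * D12M / (2 * Δy)) * (cm 0 + cm 1)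
      ≤ αt / (2 * Δy) * (cm 0 + cm 1) := by
    refine mul_le_mul_of_nonneg_right ?_ (add_nonneg (hcm 0) (hcm 1))
    calc D11M / (4 * Δx) + Real.sqrt 3 * D12M / (2 * Δy)
        = ((Δy / (2 * Δx)) * D11M + Real.sqrt 3 * D12M) / (2 * Δy) := by field_simp; ring
      _ ≤ αt / (2 * Δy) := by gcongr
  simp only [xDiffusionFlux, Fin.sum_univ_two]
  linear_combination (1 / (4 * Δx)) * (hm 0 + hm 1 + hp 0 + hp 1)
    + Real.sqrt 3 / (4 * Δy) * (htm + htp) + hpen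

lemma sum_xDiffusionFlux_sub_le {a b c d A B C E q l p n r w : Fin 2 → ℝ}
    {Δx Δy αt D11M D12M : ℝ} (hΔx : 0 < Δx) (hΔy : 0 < Δy)
    (ha : ∀ β, 0 ≤ a β ∧ a β ≤ D11M) (hb : ∀ β, 0 ≤ b β ∧ b β ≤ D11M)
    (hA : ∀ β, 0 ≤ A β ∧ A β ≤ D11M) (hB : ∀ β, 0 ≤ B β ∧ B β ≤ D11M)
    (hc : ∀ β, |c β| ≤ D12M) (hd : ∀ β, |d β| ≤ D12M)
    (hC : ∀ β, |C β| ≤ D12M) (hE : ∀ β, |E β| ≤ D12M)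
    (hq : ∀ β, 0 ≤ q β) (hl : ∀ β, 0 ≤ l β) (hp : ∀ β, 0 ≤ p β) (hn : ∀ β, 0 ≤ n β)
    (hr : ∀ β, 0 ≤ r β) (hw : ∀ β, 0 ≤ w β)
    (hαt : (Δy / (2 * Δx)) * D11M + Real.sqrt 3 * D12M ≤ αt) :
    ∑ β, (1 / 2 : ℝ) * (xDiffusionFlux a b c d q l p n Δx Δy αt β
        - xDiffusionFlux A B C E p n r w Δx Δy αt β)
      ≤ (D11M / (4 * Δx) + (Real.sqrt 3 * D12M + αt) / (2 * Δy))
          * (p 0 + p 1 + n 0 + n 1) := by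
  have hleft := sum_xDiffusionFlux_le hΔx hΔy ha hb hc hd hq hl hp hn hαt
  have hright := sum_xDiffusionFlux_le (D12m := -E) (D12p := -C) hΔx hΔy hB hA
    (by simpa only [Pi.neg_apply, abs_neg] using hE) (by simpa only [Pi.neg_apply, abs_neg] using hC)
    hw hr hn hp hαt
  simp only [sub_eq_add_neg, neg_xDiffusionFlux, mul_add, Finset.sum_add_distrib]
  linarith

lemma sum_GxV_add_jumpV_sub_le {D11m D11p D12m D12p : ℕ → ℕ → Fin 2 → ℝ}
    {c00 c10 c01 c11 : ℕ → ℕ → ℝ} {Δx Δy αt D11M D12M : ℝ} {i j : ℕ} (hi : 2 ≤ i)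
    (hΔx : 0 < Δx) (hΔy : 0 < Δy)
    (hc : ∀ k, i - 1 ≤ k → k ≤ i + 1 → 0 ≤ c00 k j ∧ 0 ≤ c10 k j ∧ 0 ≤ c01 k j ∧ 0 ≤ c11 k j)
    (hD11 : ∀ e, i - 1 ≤ e → e ≤ i → ∀ β : Fin 2,
      (0 ≤ D11m e j β ∧ D11m e j β ≤ D11M) ∧ (0 ≤ D11p e j β ∧ D11p e j β ≤ D11M))
    (hD12 : ∀ e, i - 1 ≤ e → e ≤ i → ∀ β : Fin 2, |D12m e j β| ≤ D12M ∧ |D12p e j β| ≤ D12M)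
    (hαt : (Δy / (2 * Δx)) * D11M + Real.sqrt 3 * D12M ≤ αt) :
    ∑ β : Fin 2, (1 / 2 : ℝ) *
        ((GxV D11m D11p D12m D12p c00 c10 c01 c11 Δx Δy (i - 1) j β
            + (αt / Δy) * jumpV c00 c10 c01 c11 (i - 1) j β)
          - (GxV D11m D11p D12m D12p c00 c10 c01 c11 Δx Δy i j β
            + (αt / Δy) * jumpV c00 c10 c01 c11 i j β))
      ≤ (D11M / (4 * Δx) + (Real.sqrt 3 * D12M + αt) / (2 * Δy))
          * (c00 i j + c01 i j + c10 i j + c11 i j) := by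
  have hi₁ : i - 1 + 1 = i := by omega
  have hi₂ : i - 1 - 1 + 1 = i - 1 := by omega
  obtain ⟨hL00, hL10, hL01, hL11⟩ := hc (i - 1) le_rfl (by omega)
  obtain ⟨h00, h10, h01, h11⟩ := hc i (by omega) (by omega)
  obtain ⟨hR00, hR10, hR01, hR11⟩ := hc (i + 1) (by omega) le_rfl
  have hDl11 := hD11 (i - 1) le_rfl (by omega)
  have hDr11 := hD11 i (by omega) le_rfl
  have hDl12 := hD12 (i - 1) le_rfl (by omega)
  have hDr12 := hD12 i (by omega) le_rfl
  have htraces : cpV c00 c01 (i - 1) j 0 + cpV c00 c01 (i - 1) j 1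
      + cmV c10 c11 i j 0 + cmV c10 c11 i j 1 = c00 i j + c01 i j + c10 i j + c11 i j := by
    simp only [cpV, cmV, hi₁]
    linarith [ga_zero_add_ga_one (c00 i j) (c01 i j), ga_zero_add_ga_one (c10 i j) (c11 i j)]
  simp only [GxV_add_jumpV, hi₁]
  rw [← htraces]
  exact sum_xDiffusionFlux_sub_le hΔx hΔy
    (fun β => (hDl11 β).1) (fun β => (hDl11 β).2) (fun β => (hDr11 β).1) (fun β => (hDr11 β).2)
    (fun β => (hDl12 β).1) (fun β => (hDl12 β).2) (fun β => (hDr12 β).1) (fun β => (hDr12 β).2)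
    (cpV_nonneg (by rwa [hi₂]) (by rwa [hi₂])) (cmV_nonneg hL10 hL11)
    (cpV_nonneg (by rwa [hi₁]) (by rwa [hi₁])) (cmV_nonneg h10 h11)
    (cpV_nonneg hR00 hR01) (cmV_nonneg hR10 hR11) hαt

lemma Hdx_pos_of_sum_le {D11m D11p D12m D12p : ℕ → ℕ → Fin 2 → ℝ}
    {Φ c00 c10 c01 c11 : ℕ → ℕ → ℝ} {αt Δx Δy Δt K : ℝ} {i j : ℕ} (hΔtΔx : 0 ≤ Δt / Δx)
    (hc : 0 < c00 i j ∧ 0 < c10 i j ∧ 0 < c01 i j ∧ 0 < c11 i j)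
    (hΦ : ∀ a b, i - 1 ≤ a → a ≤ i → j - 1 ≤ b → b ≤ j → Δt / Δx * K < Φ a b / 24)
    (hsum : ∑ β : Fin 2, (1 / 2 : ℝ) *
        ((GxV D11m D11p D12m D12p c00 c10 c01 c11 Δx Δy (i - 1) j β
            + (αt / Δy) * jumpV c00 c10 c01 c11 (i - 1) j β)
          - (GxV D11m D11p D12m D12p c00 c10 c01 c11 Δx Δy i j β
            + (αt / Δy) * jumpV c00 c10 c01 c11 i j β))
      ≤ K * (c00 i j + c01 i j + c10 i j + c11 i j)) :
    0 < Hdx D11m D11p D12m D12p Φ c00 c10 c01 c11 αt Δx Δy Δt i j := by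
  obtain ⟨h00, h10, h01, h11⟩ := hc
  have e00 := mul_pos h00 (sub_pos.mpr (hΦ (i - 1) (j - 1) le_rfl (by omega) le_rfl (by omega)))
  have e10 := mul_pos h10 (sub_pos.mpr (hΦ i (j - 1) (by omega) le_rfl le_rfl (by omega)))
  have e01 := mul_pos h01 (sub_pos.mpr (hΦ (i - 1) j le_rfl (by omega) (by omega) le_rfl))
  have e11 := mul_pos h11 (sub_pos.mpr (hΦ i j (by omega) le_rfl (by omega) le_rfl))
  have hscaled := mul_le_mul_of_nonneg_left hsum hΔtΔx
  unfold Hdx rbar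
  linarith

lemma courant_mul_le {Δx Δy Δt αt D11M D12M : ℝ} (hΔx : 0 < Δx) (hΔy : 0 < Δy) (hΔt : 0 ≤ Δt)
    (hD11M : 0 ≤ D11M) (hD12M : 0 ≤ D12M) (hαt : 0 ≤ αt) :
    Δt / Δx * (D11M / (4 * Δx) + (Real.sqrt 3 * D12M + αt) / (2 * Δy))
      ≤ (D11M * (Δt / Δx ^ 2) + 2 * (αt + D12M) * (Δt / (Δx * Δy))) / 2 := by
  have hΛ : 0 ≤ Δt / Δx ^ 2 := by positivity
  have hlam : 0 ≤ Δt / (Δx * Δy) := by positivity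
  have hD12 : Real.sqrt 3 * D12M + αt ≤ 2 * (αt + D12M) := by
    nlinarith [sqrt_three_le_two]
  calc Δt / Δx * (D11M / (4 * Δx) + (Real.sqrt 3 * D12M + αt) / (2 * Δy))
      = D11M * (Δt / Δx ^ 2) / 4 + (Real.sqrt 3 * D12M + αt) * (Δt / (Δx * Δy)) / 2 := by
        field_simp
    _ ≤ (D11M * (Δt / Δx ^ 2) + 2 * (αt + D12M) * (Δt / (Δx * Δy))) / 2 := by
        nlinarith [mul_nonneg hD11M hΛ, mul_le_mul_of_nonneg_right hD12 hlam]

theorem x_diffusion_part_positive_2d_general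
    (Nx Ny : ℕ) (Δx Δy Δt : ℝ)
    (hΔx : 0 < Δx) (hΔy : 0 < Δy) (hΔt : 0 < Δt)
    (Φ c00 c10 c01 c11 : ℕ → ℕ → ℝ) (D11m D11p D12m D12p : ℕ → ℕ → Fin 2 → ℝ)
    (αt D11M D12M : ℝ)
    -- all corner concentration values of all cells strictly positive
    (hc : ∀ i j, 1 ≤ i → i ≤ Nx → 1 ≤ j → j ≤ Ny →
      0 < c00 i j ∧ 0 < c10 i j ∧ 0 < c01 i j ∧ 0 < c11 i j)
    -- all D₁₁ values lie in [0, D₁₁^M], all |D₁₂| values are at most D₁₂^M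
    (hD11 : ∀ i j, 1 ≤ i → i ≤ Nx - 1 → 1 ≤ j → j ≤ Ny → ∀ β : Fin 2,
      (0 ≤ D11m i j β ∧ D11m i j β ≤ D11M) ∧ (0 ≤ D11p i j β ∧ D11p i j β ≤ D11M))
    (hD12 : ∀ i j, 1 ≤ i → i ≤ Nx - 1 → 1 ≤ j → j ≤ Ny → ∀ β : Fin 2,
      |D12m i j β| ≤ D12M ∧ |D12p i j β| ≤ D12M)
    -- α̃ > 0 and α̃ ≥ (Δy/(2Δx))·D₁₁^M + √3·D₁₂^M
    (hαt : (Δy / (2 * Δx)) * D11M + Real.sqrt 3 * D12M ≤ αt)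
    -- D₁₁^M·Λ₁ + 2(α̃ + D₁₂^M)·λ < Φ_m/12, Φ_m the minimum of Φ over all mesh corners
    (hCFL : ∀ i j, i ≤ Nx → j ≤ Ny →
      D11M * (Δt / Δx ^ 2) + 2 * (αt + D12M) * (Δt / (Δx * Δy)) < Φ i j / 12) :
    ∀ i j, 2 ≤ i → i ≤ Nx - 1 → 2 ≤ j → j ≤ Ny - 1 →
      0 < Hdx D11m D11p D12m D12p Φ c00 c10 c01 c11 αt Δx Δy Δt i j := by
  intro i j hi2 hi1 hj2 hj1
  obtain ⟨⟨hD11m0, hD11mM⟩, -⟩ := hD11 i j (by omega) hi1 (by omega) (by omega) 0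
  have hD12M : 0 ≤ D12M := (abs_nonneg _).trans (hD12 i j (by omega) hi1 (by omega) (by omega) 0).1
  have hD11M : 0 ≤ D11M := hD11m0.trans hD11mM
  have hαt0 : 0 ≤ αt :=
    (by positivity : 0 ≤ Δy / (2 * Δx) * D11M + Real.sqrt 3 * D12M).trans hαt
  have hcells : ∀ k, i - 1 ≤ k → k ≤ i + 1 →
      0 ≤ c00 k j ∧ 0 ≤ c10 k j ∧ 0 ≤ c01 k j ∧ 0 ≤ c11 k j := fun k _ _ => by
    obtain ⟨h00, h10, h01, h11⟩ := hc k j (by omega) (by omega) (by omega) (by omega)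
    exact ⟨h00.le, h10.le, h01.le, h11.le⟩
  refine Hdx_pos_of_sum_le (by positivity) (hc i j (by omega) (by omega) (by omega) (by omega))
    (fun a b _ ha _ hb => ?_) (sum_GxV_add_jumpV_sub_le hi2 hΔx hΔy hcells
      (fun e _ _ => hD11 e j (by omega) (by omega) (by omega) (by omega))
      (fun e _ _ => hD12 e j (by omega) (by omega) (by omega) (by omega)) hαt)
  calc Δt / Δx * (D11M / (4 * Δx) + (Real.sqrt 3 * D12M + αt) / (2 * Δy))
      ≤ (D11M * (Δt / Δx ^ 2) + 2 * (αt + D12M) * (Δt / (Δx * Δy))) / 2 :=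
        courant_mul_le hΔx hΔy hΔt.le hD11M hD12M hαt0
    _ < Φ a b / 24 := by linarith [hCFL a b (by omega) (by omega)]

/-- Lemma 3.6, x-part (2D): positivity of the x-diffusion part `H^d_x` for interior cells. -/
theorem x_diffusion_part_positive_2d
    (Nx Ny : ℕ) (hNx : 4 ≤ Nx) (hNy : 4 ≤ Ny) (Δx Δy Δt : ℝ)
    (hΔx : 0 < Δx) (hΔy : 0 < Δy) (hΔt : 0 < Δt)
    (Φ c00 c10 c01 c11 : ℕ → ℕ → ℝ) (D11m D11p D12m D12p : ℕ → ℕ → Fin 2 → ℝ)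
    (αt D11M D12M : ℝ)
    (hΦ : ∀ i j, i ≤ Nx → j ≤ Ny → 0 < Φ i j)
    -- all corner concentration values of all cells strictly positive
    (hc : ∀ i j, 1 ≤ i → i ≤ Nx → 1 ≤ j → j ≤ Ny →
      0 < c00 i j ∧ 0 < c10 i j ∧ 0 < c01 i j ∧ 0 < c11 i j)
    -- all D₁₁ values lie in [0, D₁₁^M], all |D₁₂| values are at most D₁₂^M
    (hD11 : ∀ i j, 1 ≤ i → i ≤ Nx - 1 → 1 ≤ j → j ≤ Ny → ∀ β : Fin 2,
      (0 ≤ D11m i j β ∧ D11m i j β ≤ D11M) ∧ (0 ≤ D11p i j β ∧ D11p i j β ≤ D11M))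
    (hD12 : ∀ i j, 1 ≤ i → i ≤ Nx - 1 → 1 ≤ j → j ≤ Ny → ∀ β : Fin 2,
      |D12m i j β| ≤ D12M ∧ |D12p i j β| ≤ D12M)
    -- α̃ > 0 and α̃ ≥ (Δy/(2Δx))·D₁₁^M + √3·D₁₂^M
    (hαt0 : 0 < αt)
    (hαt : (Δy / (2 * Δx)) * D11M + Real.sqrt 3 * D12M ≤ αt)
    -- D₁₁^M·Λ₁ + 2(α̃ + D₁₂^M)·λ < Φ_m/12, Φ_m the minimum of Φ over all mesh corners
    (hCFL : ∀ i j, i ≤ Nx → j ≤ Ny →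
      D11M * (Δt / Δx ^ 2) + 2 * (αt + D12M) * (Δt / (Δx * Δy)) < Φ i j / 12) :
    ∀ i j, 2 ≤ i → i ≤ Nx - 1 → 2 ≤ j → j ≤ Ny - 1 →
      0 < Hdx D11m D11p D12m D12p Φ c00 c10 c01 c11 αt Δx Δy Δt i j :=
  x_diffusion_part_positive_2d_general Nx Ny Δx Δy Δt hΔx hΔy hΔt Φ c00 c10 c01 c11 D11m D11p D12m
    D12p αt D11M D12M hc hD11 hD12 hαt hCFL

end DG2D
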